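/- arXiv:2510.07148 — 2 statements merged into one kernel-verified Lean document; each statement's English description precedes it below -/
import Mathlib

section
/- Let C and D be symmetric 3×3 real matrices. Define the vector P : Fin 3 → ℝ by P_μ := 2 ∑_{ν,ρ,σ} ε_{μνρ} C_{νσ} D_{ρσ}, where ε_{μνρ} is the Levi-Civita symbol on three indices (the sign of the permutation (μ,ν,ρ), and 0 if two indices coincide). Then P = 0 if and only if C and D commute, i.e. C * D = D * C. -/
/-- Levi-Civita symbol on three indices: the sign of the permutation
`(μ,ν,ρ)` of `(0,1,2)`, and `0` if two indices coincide. -/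
def ε3 (μ ν ρ : Fin 3) : ℝ :=
  ∑ σ : Equiv.Perm (Fin 3),
    if (σ 0, σ 1, σ 2) = (μ, ν, ρ) then ((Equiv.Perm.sign σ : ℤ) : ℝ) else 0

lemma ε3_eq (σ₀ : Equiv.Perm (Fin 3)) :
    ε3 (σ₀ 0) (σ₀ 1) (σ₀ 2) = ((Equiv.Perm.sign σ₀ : ℤ) : ℝ) := by
  unfold ε3
  rw [Finset.sum_eq_single σ₀]
  · simp
  · intro b _ hb
    rw [if_neg]
    intro h
    simp only [Prod.mk.injEq] at h
    exact hb (Equiv.ext fun i => by fin_cases i <;> simp [h.1, h.2.1, h.2.2])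
  · simp

lemma ε3_zero {μ ν ρ : Fin 3} (h : μ = ν ∨ ν = ρ ∨ μ = ρ) : ε3 μ ν ρ = 0 := by
  unfold ε3
  apply Finset.sum_eq_zero
  intro σ _
  rw [if_neg]
  intro heq
  simp only [Prod.mk.injEq] at heq
  obtain ⟨h0, h1, h2⟩ := heq
  rcases h with h | h | h
  · have : σ 0 = σ 1 := by rw [h0, h1, h]
    exact absurd (σ.injective this) (by decide)
  · have : σ 1 = σ 2 := by rw [h1, h2, h]
    exact absurd (σ.injective this) (by decide)
  · have : σ 0 = σ 2 := by rw [h0, h2, h]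
    exact absurd (σ.injective this) (by decide)

@[simp] lemma ε3_000 : ε3 0 0 0 = 0 := ε3_zero (by decide)
@[simp] lemma ε3_001 : ε3 0 0 1 = 0 := ε3_zero (by decide)
@[simp] lemma ε3_002 : ε3 0 0 2 = 0 := ε3_zero (by decide)
@[simp] lemma ε3_010 : ε3 0 1 0 = 0 := ε3_zero (by decide)
@[simp] lemma ε3_011 : ε3 0 1 1 = 0 := ε3_zero (by decide)
@[simp] lemma ε3_020 : ε3 0 2 0 = 0 := ε3_zero (by decide)
@[simp] lemma ε3_022 : ε3 0 2 2 = 0 := ε3_zero (by decide)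
@[simp] lemma ε3_100 : ε3 1 0 0 = 0 := ε3_zero (by decide)
@[simp] lemma ε3_101 : ε3 1 0 1 = 0 := ε3_zero (by decide)
@[simp] lemma ε3_110 : ε3 1 1 0 = 0 := ε3_zero (by decide)
@[simp] lemma ε3_111 : ε3 1 1 1 = 0 := ε3_zero (by decide)
@[simp] lemma ε3_112 : ε3 1 1 2 = 0 := ε3_zero (by decide)
@[simp] lemma ε3_121 : ε3 1 2 1 = 0 := ε3_zero (by decide)
@[simp] lemma ε3_122 : ε3 1 2 2 = 0 := ε3_zero (by decide)
@[simp] lemma ε3_200 : ε3 2 0 0 = 0 := ε3_zero (by decide)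
@[simp] lemma ε3_202 : ε3 2 0 2 = 0 := ε3_zero (by decide)
@[simp] lemma ε3_211 : ε3 2 1 1 = 0 := ε3_zero (by decide)
@[simp] lemma ε3_212 : ε3 2 1 2 = 0 := ε3_zero (by decide)
@[simp] lemma ε3_220 : ε3 2 2 0 = 0 := ε3_zero (by decide)
@[simp] lemma ε3_221 : ε3 2 2 1 = 0 := ε3_zero (by decide)
@[simp] lemma ε3_222 : ε3 2 2 2 = 0 := ε3_zero (by decide)

lemma ε3_val (σ₀ : Equiv.Perm (Fin 3)) (a b c : Fin 3) (h0 : σ₀ 0 = a) (h1 : σ₀ 1 = b)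
    (h2 : σ₀ 2 = c) : ε3 a b c = ((Equiv.Perm.sign σ₀ : ℤ) : ℝ) := by
  rw [← h0, ← h1, ← h2, ε3_eq]

@[simp] lemma ε3_012 : ε3 0 1 2 = 1 := by
  rw [ε3_val (Equiv.refl _) 0 1 2 (by decide) (by decide) (by decide), show Equiv.Perm.sign (Equiv.refl (Fin 3)) = 1 from by decide]; norm_num
@[simp] lemma ε3_120 : ε3 1 2 0 = 1 := by
  rw [ε3_val (finRotate 3) _ _ _ (by decide) (by decide) (by decide),
    show Equiv.Perm.sign (finRotate 3) = 1 from by decide]; norm_num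
@[simp] lemma ε3_201 : ε3 2 0 1 = 1 := by
  rw [ε3_val (finRotate 3)⁻¹ _ _ _ (by decide) (by decide) (by decide),
    show Equiv.Perm.sign (finRotate 3)⁻¹ = 1 from by decide]; norm_num
@[simp] lemma ε3_021 : ε3 0 2 1 = -1 := by
  rw [ε3_val (Equiv.swap 1 2) _ _ _ (by decide) (by decide) (by decide),
    show Equiv.Perm.sign (Equiv.swap (1:Fin 3) 2) = -1 from by decide]; norm_num
@[simp] lemma ε3_102 : ε3 1 0 2 = -1 := by
  rw [ε3_val (Equiv.swap 0 1) _ _ _ (by decide) (by decide) (by decide),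
    show Equiv.Perm.sign (Equiv.swap (0:Fin 3) 1) = -1 from by decide]; norm_num
@[simp] lemma ε3_210 : ε3 2 1 0 = -1 := by
  rw [ε3_val (Equiv.swap 0 2) _ _ _ (by decide) (by decide) (by decide),
    show Equiv.Perm.sign (Equiv.swap (0:Fin 3) 2) = -1 from by decide]; norm_num


/-- For symmetric 3×3 real matrices `C`, `D`, the vector
`P_μ = 2 ∑_{ν,ρ,σ} ε_{μνρ} C_{νσ} D_{ρσ}` vanishes iff `C` and `D` commute. -/
theorem superPoynting_eq_zero_iff_commute
    (C D : Matrix (Fin 3) (Fin 3) ℝ) (hC : C.transpose = C) (hD : D.transpose = D) :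
    (∀ μ : Fin 3, (2 : ℝ) * ∑ ν, ∑ ρ, ∑ s, ε3 μ ν ρ * C ν s * D ρ s = 0) ↔
      C * D = D * C := by
  have hCs : ∀ i j, C i j = C j i := fun i j => by
    rw [← congrFun (congrFun hC j) i, Matrix.transpose_apply]
  have hDs : ∀ i j, D i j = D j i := fun i j => by
    rw [← congrFun (congrFun hD j) i, Matrix.transpose_apply]
  constructor
  · intro h
    have h0 := h 0; have h1 := h 1; have h2 := h 2
    simp only [Fin.mk_zero, Fin.mk_one, Fin.reduceFinMk, Fin.sum_univ_three, ε3_012, ε3_120, ε3_201, ε3_021, ε3_102, ε3_210,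
      ε3_000, ε3_001, ε3_002, ε3_010, ε3_011, ε3_020, ε3_022, ε3_100, ε3_101,
      ε3_110, ε3_111, ε3_112, ε3_121, ε3_122, ε3_200, ε3_202, ε3_211, ε3_212,
      ε3_220, ε3_221, ε3_222, hCs 1 0, hCs 2 0, hCs 2 1, hDs 1 0, hDs 2 0, hDs 2 1] at h0 h1 h2
    ext i j
    fin_cases i <;> fin_cases j <;>
      simp only [Fin.mk_zero, Fin.mk_one, Fin.reduceFinMk, Matrix.mul_apply, Fin.sum_univ_three,
        hCs 1 0, hCs 2 0, hCs 2 1, hDs 1 0, hDs 2 0, hDs 2 1] <;>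
      linarith [h0, h1, h2]
  · intro h μ
    have e01 := congrFun (congrFun h 0) 1
    have e02 := congrFun (congrFun h 0) 2
    have e12 := congrFun (congrFun h 1) 2
    simp only [Fin.mk_zero, Fin.mk_one, Fin.reduceFinMk, Matrix.mul_apply, Fin.sum_univ_three,
      hCs 1 0, hCs 2 0, hCs 2 1, hDs 1 0, hDs 2 0, hDs 2 1] at e01 e02 e12
    fin_cases μ <;>
      simp only [Fin.mk_zero, Fin.mk_one, Fin.reduceFinMk, Fin.sum_univ_three, ε3_012, ε3_120, ε3_201, ε3_021, ε3_102, ε3_210,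
        ε3_000, ε3_001, ε3_002, ε3_010, ε3_011, ε3_020, ε3_022, ε3_100, ε3_101,
        ε3_110, ε3_111, ε3_112, ε3_121, ε3_122, ε3_200, ε3_202, ε3_211, ε3_212,
        ε3_220, ε3_221, ε3_222, hCs 1 0, hCs 2 0, hCs 2 1, hDs 1 0, hDs 2 0, hDs 2 1] <;>
      linarith [e01, e02, e12]
end

section
/- Let d be a Weyl candidate on ℝ⁴ with the Minkowski metric η = diag(−1,1,1,1), let 𝒟 be its rescaled Bel–Robinson tensor, and let N : Fin 4 → ℝ be a nonzero null vector (η_{μν} N^μ N^ν = 0, N ≠ 0). Then the asymptotic radiant supermomentum Π^α := −𝒟^α{}_{μνρ} N^μ N^ν N^ρ vanishes (Π^α = 0 for all α) if and only if N is a multiple principal null direction of d, i.e. (N^β N^γ d_{αβγδ}) N_ε = (N^β N^γ d_{αβγε}) N_δ for all α, δ, ε. -/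
noncomputable section

/-- Minkowski metric η = diag(-1,1,1,1) on `ℝ⁴` (equal to its own inverse). -/
def η (α β : Fin 4) : ℝ := if α = β then (if α = 0 then -1 else 1) else 0

/-- Levi-Civita symbol on four indices: the sign of the permutation
`(α,β,γ,δ)` of `(0,1,2,3)`, and `0` if two indices coincide; `ε 0 1 2 3 = 1`. -/
def ε (α β γ δ : Fin 4) : ℝ :=
  ∑ σ : Equiv.Perm (Fin 4),
    if (σ 0, σ 1, σ 2, σ 3) = (α, β, γ, δ) then ((Equiv.Perm.sign σ : ℤ) : ℝ) else 0

/-- A Weyl candidate: antisymmetric in each pair, symmetric under pair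
interchange, first Bianchi identity, and trace-free w.r.t. `η`. -/
def IsWeylCandidate (d : Fin 4 → Fin 4 → Fin 4 → Fin 4 → ℝ) : Prop :=
  (∀ α β γ δ, d α β γ δ = - d β α γ δ) ∧
  (∀ α β γ δ, d α β γ δ = - d α β δ γ) ∧
  (∀ α β γ δ, d α β γ δ = d γ δ α β) ∧
  (∀ α β γ δ, d α β γ δ + d α γ δ β + d α δ β γ = 0) ∧
  (∀ β δ, ∑ α, ∑ γ, η α γ * d α β γ δ = 0)

/-- Rescaled Bel–Robinson tensor
`𝒟_{αβγδ} = d_{αμγ}{}^ν d_{δνβ}{}^μ + d_{αμδ}{}^ν d_{γνβ}{}^μ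
  - (1/8) η_{αβ} η_{γδ} d_{ρσμν} d^{ρσμν}`. -/
def BR (d : Fin 4 → Fin 4 → Fin 4 → Fin 4 → ℝ) (α β γ δ : Fin 4) : ℝ :=
  (∑ μ, ∑ ν, ∑ κ, ∑ lam, η ν κ * η μ lam *
      (d α μ γ κ * d δ ν β lam + d α μ δ κ * d γ ν β lam))
  - (1/8) * η α β * η γ δ *
      (∑ ρ, ∑ s, ∑ μ, ∑ ν, ∑ ρ', ∑ s', ∑ μ', ∑ ν',
        η ρ ρ' * η s s' * η μ μ' * η ν ν' * d ρ s μ ν * d ρ' s' μ' ν')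

/-- Hodge dual `(*d)_{αβγδ} = (1/2) ε_{αβ}{}^{μν} d_{μνγδ}`. -/
def hodge (d : Fin 4 → Fin 4 → Fin 4 → Fin 4 → ℝ) (α β γ δ : Fin 4) : ℝ :=
  (1/2) * ∑ μ, ∑ ν, ∑ κ, ∑ lam, η μ κ * η ν lam * ε α β κ lam * d μ ν γ δ

/-- Electric part `D_{αβ} = n^μ n^ν d_{αμβν}`. -/
def electric (d : Fin 4 → Fin 4 → Fin 4 → Fin 4 → ℝ) (n : Fin 4 → ℝ) (α β : Fin 4) : ℝ :=
  ∑ μ, ∑ ν, n μ * n ν * d α μ β ν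

/-- Magnetic part `C_{αβ} = n^μ n^ν (*d)_{αμβν}`. -/
def magnetic (d : Fin 4 → Fin 4 → Fin 4 → Fin 4 → ℝ) (n : Fin 4 → ℝ) (α β : Fin 4) : ℝ :=
  ∑ μ, ∑ ν, n μ * n ν * hodge d α μ β ν

/-- Asymptotic supermomentum `Π^α = -𝒟^α{}_{μνρ} u^μ u^ν u^ρ`. -/
def supermomentum (d : Fin 4 → Fin 4 → Fin 4 → Fin 4 → ℝ) (u : Fin 4 → ℝ) (α : Fin 4) : ℝ :=
  - ∑ lam, ∑ μ, ∑ ν, ∑ ρ, η α lam * u μ * u ν * u ρ * BR d lam μ ν ρ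

/-- Asymptotic superenergy density `W = 𝒟_{αβγδ} u^α u^β u^γ u^δ`. -/
def superenergy (d : Fin 4 → Fin 4 → Fin 4 → Fin 4 → ℝ) (u : Fin 4 → ℝ) : ℝ :=
  ∑ α, ∑ β, ∑ γ, ∑ δ, u α * u β * u γ * u δ * BR d α β γ δ


/-!
Contracting the Bel–Robinson tensor three times with the null vector `N` kills its trace term and
leaves `Q_λ = 2 N^ν W^{pq} d_{λpνq}`, where `w_{ab} = N^μ N^ν d_{aμbν}` is the electric part of `d`
and `W` is `w` with raised indices; one more contraction gives `N^λ Q_λ = 2 w_{pq} w^{pq}`.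
As `w` is symmetric and annihilates `N`, its Lorentzian square is the Euclidean square of its
projection onto the spacelike 2-plane orthogonal to `N` and to the time axis. So `Q = 0` forces
`w = c N♭ ⊗ N♭ + N♭ ⊗ V♭ + V♭ ⊗ N♭` with `V` spatial and orthogonal to `N`; for such `w` one finds
`Q_λ = -2 (V·V) N_λ`, hence `V = 0`, and `w = c N♭ ⊗ N♭` is the multiple-PND condition.
Conversely, for `w = c N♭ ⊗ N♭` every term of `Q` vanishes by antisymmetry of `d`.
-/

open Finset

namespace BelRobinson

theorem sum_sum_mul_mul_eq_zero_of_antisymm {ι : Type*} [Fintype ι] (v : ι → ℝ)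
    (f : ι → ι → ℝ) (hf : ∀ x y, f x y = -f y x) : ∑ x, ∑ y, v x * v y * f x y = 0 := by
  have h : ∑ x, ∑ y, v x * v y * f x y = -∑ x, ∑ y, v x * v y * f x y := calc
    _ = ∑ y, ∑ x, v x * v y * f x y := sum_comm
    _ = -∑ x, ∑ y, v x * v y * f x y := by
      simp only [← sum_neg_distrib]
      exact sum_congr rfl fun y _ => sum_congr rfl fun x _ => by rw [hf]; ring
  linarith

theorem sum_comm₄ {α β γ δ M : Type*} [Fintype α] [Fintype β] [Fintype γ] [Fintype δ]
    [AddCommMonoid M] (f : α → β → γ → δ → M) :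
    ∑ a, ∑ b, ∑ c, ∑ e, f a b c e = ∑ c, ∑ e, ∑ a, ∑ b, f a b c e := calc
  _ = ∑ p : α × β, ∑ q : γ × δ, f p.1 p.2 q.1 q.2 := by simp only [Fintype.sum_prod_type]
  _ = ∑ q : γ × δ, ∑ p : α × β, f p.1 p.2 q.1 q.2 := sum_comm
  _ = _ := by simp only [Fintype.sum_prod_type]

theorem forall_mul_eq_mul_iff_exists_eq_mul_mul {ι K : Type*} [Field K] {w : ι → ι → K}
    (hw : ∀ a b, w a b = w b a) {u : ι → K} (hu : u ≠ 0) :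
    (∀ a b e, w a b * u e = w a e * u b) ↔ ∃ c, ∀ a b, w a b = c * u a * u b := by
  constructor
  · intro h
    obtain ⟨e, he : u e ≠ 0⟩ := Function.ne_iff.1 hu
    refine ⟨w e e / u e ^ 2, fun a b => ?_⟩
    have hab := h a b e
    have hae := h e a e
    rw [hw e a] at hae
    field_simp
    linear_combination u e * hab + u b * hae
  · rintro ⟨c, hc⟩ a b e
    rw [hc, hc]
    ring

theorem η_mul_self (a : Fin 4) : η a a * η a a = 1 := by
  simp only [η]; split_ifs <;> norm_num

theorem sum_η_mul (a : Fin 4) (f : Fin 4 → ℝ) : ∑ b, η a b * f b = η a a * f a := by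
  simp [η, ite_mul]

theorem sum_sum_η_mul_η (a b : Fin 4) (f : Fin 4 → Fin 4 → ℝ) :
    ∑ c, ∑ e, η a c * η b e * f c e = η a a * η b b * f a b := by
  simp only [mul_assoc, ← mul_sum, sum_η_mul]

def lower (v : Fin 4 → ℝ) (a : Fin 4) : ℝ := ∑ b, η a b * v b

def raise (w : Fin 4 → Fin 4 → ℝ) (a b : Fin 4) : ℝ := ∑ c, ∑ e, η a c * η b e * w c e

def lorentzNormSq (w : Fin 4 → Fin 4 → ℝ) : ℝ := ∑ a, ∑ b, raise w a b * w a b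

theorem lower_apply (v : Fin 4 → ℝ) (a : Fin 4) : lower v a = η a a * v a := sum_η_mul a v

theorem lower_apply_zero (v : Fin 4 → ℝ) : lower v 0 = -v 0 := by
  simp [lower_apply, η]

theorem lower_apply_succ (v : Fin 4 → ℝ) (i : Fin 3) : lower v i.succ = v i.succ := by
  simp [lower_apply, η, Fin.succ_ne_zero]

theorem lower_lower (v : Fin 4 → ℝ) : lower (lower v) = v := by
  ext a
  rw [lower_apply, lower_apply, ← mul_assoc, η_mul_self, one_mul]

theorem lower_eq_zero_iff {v : Fin 4 → ℝ} : lower v = 0 ↔ v = 0 := by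
  refine ⟨fun h => ?_, fun h => ?_⟩
  · rw [← lower_lower v, h]
    ext a
    simp [lower]
  · ext a
    simp [lower, h]

theorem raise_apply (w : Fin 4 → Fin 4 → ℝ) (a b : Fin 4) :
    raise w a b = η a a * η b b * w a b :=
  sum_sum_η_mul_η a b w

theorem sum_mul_lower (u v : Fin 4 → ℝ) :
    ∑ a, u a * lower v a = ∑ a, ∑ b, η a b * u a * v b := by
  simp only [lower, mul_sum]
  exact sum_congr rfl fun a _ => sum_congr rfl fun b _ => by ring

theorem sum_lower_mul_lower (u v : Fin 4 → ℝ) : ∑ a, lower u a * lower v a = ∑ a, u a * v a :=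
  sum_congr rfl fun a _ => by
    rw [lower_apply, lower_apply, mul_mul_mul_comm, η_mul_self, one_mul]

theorem eq_zero_of_sum_mul_lower_self_eq_zero {v : Fin 4 → ℝ} (h0 : v 0 = 0)
    (h : ∑ a, v a * lower v a = 0) : v = 0 := by
  rw [Fin.sum_univ_succ, h0, zero_mul, zero_add] at h
  simp only [lower_apply_succ, sum_mul_self_eq_zero_iff, mem_univ, true_implies] at h
  ext a
  cases a using Fin.cases with
  | zero => exact h0
  | succ i => exact h i

theorem apply_zero_ne_zero_of_null {N : Fin 4 → ℝ} (hN : ∑ μ, ∑ ν, η μ ν * N μ * N ν = 0)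
    (hN0 : N ≠ 0) : N 0 ≠ 0 :=
  fun h0 => hN0 (eq_zero_of_sum_mul_lower_self_eq_zero h0 (by rw [sum_mul_lower, hN]))

def crossContraction (d : Fin 4 → Fin 4 → Fin 4 → Fin 4 → ℝ) (α β γ δ : Fin 4) : ℝ :=
  ∑ m, ∑ n, η m m * η n n * (d α m γ n * d δ n β m)

def weylSq (d : Fin 4 → Fin 4 → Fin 4 → Fin 4 → ℝ) : ℝ :=
  ∑ ρ, ∑ s, ∑ μ, ∑ ν, ∑ ρ', ∑ s', ∑ μ', ∑ ν',
    η ρ ρ' * η s s' * η μ μ' * η ν ν' * d ρ s μ ν * d ρ' s' μ' ν'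

theorem BR_eq (d : Fin 4 → Fin 4 → Fin 4 → Fin 4 → ℝ) (α β γ δ : Fin 4) :
    BR d α β γ δ = crossContraction d α β γ δ + crossContraction d α β δ γ
      - η α β * η γ δ * (weylSq d / 8) := by
  rw [BR, crossContraction, crossContraction, weylSq]
  congr 1
  · simp only [sum_sum_η_mul_η, ← sum_add_distrib]
    exact sum_congr rfl fun _ _ => sum_congr rfl fun _ _ => by ring
  · ring

def contractBR (d : Fin 4 → Fin 4 → Fin 4 → Fin 4 → ℝ) (N : Fin 4 → ℝ) (a : Fin 4) : ℝ :=
  ∑ μ, ∑ ν, ∑ ρ, N μ * N ν * N ρ * BR d a μ ν ρ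

theorem supermomentum_eq_neg_lower (d : Fin 4 → Fin 4 → Fin 4 → Fin 4 → ℝ) (N : Fin 4 → ℝ)
    (α : Fin 4) : supermomentum d N α = -lower (contractBR d N) α := by
  simp only [supermomentum, lower, contractBR, mul_sum]
  congr 1
  exact sum_congr rfl fun _ _ => sum_congr rfl fun _ _ => sum_congr rfl fun _ _ =>
    sum_congr rfl fun _ _ => by ring

theorem supermomentum_eq_zero_iff (d : Fin 4 → Fin 4 → Fin 4 → Fin 4 → ℝ) (N : Fin 4 → ℝ) :
    (∀ α, supermomentum d N α = 0) ↔ ∀ lam, contractBR d N lam = 0 := by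
  simpa [supermomentum_eq_neg_lower, funext_iff] using lower_eq_zero_iff (v := contractBR d N)

def nullForm (N V : Fin 4 → ℝ) (c : ℝ) (a b : Fin 4) : ℝ :=
  c * lower N a * lower N b + lower N a * lower V b + lower V a * lower N b

theorem raise_nullForm (N V : Fin 4 → ℝ) (c : ℝ) (a b : Fin 4) :
    raise (nullForm N V c) a b = c * N a * N b + N a * V b + V a * N b := by
  simp only [raise_apply, nullForm, lower_apply]
  linear_combination (c * N a * N b + N a * V b + V a * N b) *
    (η b b * η b b * η_mul_self a + η_mul_self b)

section Contractions

variable {d : Fin 4 → Fin 4 → Fin 4 → Fin 4 → ℝ} (N : Fin 4 → ℝ)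

theorem electric_symm (hC : ∀ α β γ δ, d α β γ δ = d γ δ α β) (a b : Fin 4) :
    electric d N a b = electric d N b a := by
  simp only [electric]
  rw [sum_comm]
  exact sum_congr rfl fun ν _ => sum_congr rfl fun μ _ => by rw [hC]; ring

theorem sum_electric_mul_eq_zero (hB : ∀ α β γ δ, d α β γ δ = -d α β δ γ) (a : Fin 4) :
    ∑ b, electric d N a b * N b = 0 := calc
  _ = ∑ μ, N μ * ∑ b, ∑ ν, N b * N ν * d a μ b ν := by
    simp only [electric, sum_mul, mul_sum]
    rw [sum_comm]
    exact sum_congr rfl fun μ _ => sum_congr rfl fun b _ => sum_congr rfl fun ν _ => by ring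
  _ = 0 := by simp [sum_sum_mul_mul_eq_zero_of_antisymm N _ (hB a _)]

theorem sum_mul_mul_eq_neg_electric (hB : ∀ α β γ δ, d α β γ δ = -d α β δ γ) (a b : Fin 4) :
    ∑ β, ∑ γ, N β * N γ * d a β γ b = -electric d N a b := by
  simp only [electric, ← sum_neg_distrib]
  exact sum_congr rfl fun β _ => sum_congr rfl fun γ _ => by rw [hB]; ring

theorem electric_eq_sum (hA : ∀ α β γ δ, d α β γ δ = -d β α γ δ)
    (hB : ∀ α β γ δ, d α β γ δ = -d α β δ γ) (a b : Fin 4) :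
    electric d N a b = ∑ μ, ∑ ν, N μ * N ν * d μ a ν b := by
  simp only [electric]
  exact sum_congr rfl fun μ _ => sum_congr rfl fun ν _ => by rw [hA μ a ν b, hB a μ ν b, neg_neg]

theorem contractBR_eq (hA : ∀ α β γ δ, d α β γ δ = -d β α γ δ)
    (hB : ∀ α β γ δ, d α β γ δ = -d α β δ γ) (hC : ∀ α β γ δ, d α β γ δ = d γ δ α β)
    (hN : ∑ μ, ∑ ν, η μ ν * N μ * N ν = 0) (lam : Fin 4) :
    contractBR d N lam = 2 * ∑ ν, ∑ p, ∑ q, N ν * raise (electric d N) p q * d lam p ν q := by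
  have hswap : ∑ μ, ∑ ν, ∑ ρ, N μ * N ν * N ρ * crossContraction d lam μ ρ ν =
      ∑ μ, ∑ ν, ∑ ρ, N μ * N ν * N ρ * crossContraction d lam μ ν ρ :=
    sum_congr rfl fun μ _ => by
      rw [sum_comm]; exact sum_congr rfl fun _ _ => sum_congr rfl fun _ _ => by ring
  have htrace : ∑ μ, ∑ ν, ∑ ρ, N μ * N ν * N ρ * (η lam μ * η ν ρ * (weylSq d / 8)) = 0 := calc
    _ = ∑ μ, N μ * η lam μ * (weylSq d / 8) * ∑ ν, ∑ ρ, η ν ρ * N ν * N ρ := by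
      simp only [mul_sum]
      exact sum_congr rfl fun _ _ => sum_congr rfl fun _ _ => sum_congr rfl fun _ _ => by ring
    _ = 0 := by simp [hN]
  have hcontract : ∑ μ, ∑ ν, ∑ ρ, N μ * N ν * N ρ * crossContraction d lam μ ν ρ =
      ∑ ν, ∑ p, ∑ q, N ν * raise (electric d N) p q * d lam p ν q := calc
    _ = ∑ μ, ∑ ν, ∑ ρ, ∑ m, ∑ n,
          N μ * N ν * N ρ * (η m m * η n n * (d lam m ν n * d ρ n μ m)) := by
      simp only [crossContraction, mul_sum]
    _ = ∑ ν, ∑ μ, ∑ ρ, ∑ m, ∑ n,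
          N μ * N ν * N ρ * (η m m * η n n * (d lam m ν n * d ρ n μ m)) := sum_comm
    _ = ∑ ν, ∑ m, ∑ n, ∑ μ, ∑ ρ,
          N μ * N ν * N ρ * (η m m * η n n * (d lam m ν n * d ρ n μ m)) :=
      sum_congr rfl fun _ _ => sum_comm₄ _
    _ = _ := by
      refine sum_congr rfl fun ν _ => sum_congr rfl fun m _ => sum_congr rfl fun n _ => ?_
      simp only [raise_apply, electric_eq_sum N hA hB m n, mul_sum, sum_mul]
      exact sum_congr rfl fun μ _ => sum_congr rfl fun ρ _ => by rw [hC ρ n μ m]; ring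
  simp only [contractBR, BR_eq, mul_sub, mul_add, sum_add_distrib, sum_sub_distrib]
  rw [hswap, htrace, hcontract]
  ring

theorem sum_mul_contractBR (hA : ∀ α β γ δ, d α β γ δ = -d β α γ δ)
    (hB : ∀ α β γ δ, d α β γ δ = -d α β δ γ) (hC : ∀ α β γ δ, d α β γ δ = d γ δ α β)
    (hN : ∑ μ, ∑ ν, η μ ν * N μ * N ν = 0) :
    ∑ lam, N lam * contractBR d N lam = 2 * lorentzNormSq (electric d N) := calc
  _ = ∑ lam, ∑ ν, ∑ p, ∑ q, 2 * raise (electric d N) p q * (N lam * N ν * d lam p ν q) := by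
    simp only [contractBR_eq N hA hB hC hN, mul_sum]
    exact sum_congr rfl fun _ _ => sum_congr rfl fun _ _ => sum_congr rfl fun _ _ =>
      sum_congr rfl fun _ _ => by ring
  _ = ∑ p, ∑ q, ∑ lam, ∑ ν, 2 * raise (electric d N) p q * (N lam * N ν * d lam p ν q) :=
    sum_comm₄ _
  _ = _ := by simp only [lorentzNormSq, electric_eq_sum N hA hB, mul_sum, mul_assoc]

theorem contractBR_eq_of_electric_eq_nullForm {V : Fin 4 → ℝ} {c : ℝ}
    (hA : ∀ α β γ δ, d α β γ δ = -d β α γ δ) (hB : ∀ α β γ δ, d α β γ δ = -d α β δ γ)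
    (hC : ∀ α β γ δ, d α β γ δ = d γ δ α β) (hN : ∑ μ, ∑ ν, η μ ν * N μ * N ν = 0)
    (hw : electric d N = nullForm N V c) (hVN : ∑ a, V a * lower N a = 0) (lam : Fin 4) :
    contractBR d N lam = -2 * (∑ a, V a * lower V a) * lower N lam := by
  have hsplit : ∑ ν, ∑ p, ∑ q, N ν * raise (electric d N) p q * d lam p ν q =
      ∑ p, (c * N p + V p) * (∑ ν, ∑ q, N ν * N q * d lam p ν q) +
        ∑ q, V q * ∑ p, ∑ ν, N p * N ν * d lam p ν q := by
    simp only [hw, raise_nullForm, Fin.sum_univ_four]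
    ring
  have hVw : ∑ q, V q * nullForm N V c lam q = (∑ a, V a * lower V a) * lower N lam := by
    simp only [nullForm, Fin.sum_univ_four] at hVN ⊢
    linear_combination (c * lower N lam + lower V lam) * hVN
  rw [contractBR_eq N hA hB hC hN, hsplit]
  simp only [sum_sum_mul_mul_eq_zero_of_antisymm N _ (hB lam _), sum_mul_mul_eq_neg_electric N hB,
    hw, mul_zero, sum_const_zero, zero_add, mul_neg, sum_neg_distrib, hVw]
  ring

end Contractions

/-- `N 0 ^ 2` times the projection of `w` onto the spacelike 2-plane orthogonal to `N` and to the
time axis. -/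
def screenPart (w : Fin 4 → Fin 4 → ℝ) (N : Fin 4 → ℝ) (a b : Fin 4) : ℝ :=
  N 0 ^ 2 * w a b + N 0 * (lower N a * w b 0 + lower N b * w a 0) + lower N a * lower N b * w 0 0

section Screen

variable {w : Fin 4 → Fin 4 → ℝ} {N : Fin 4 → ℝ}

theorem screenPart_zero_left (hw : ∀ a b, w a b = w b a) (b : Fin 4) :
    screenPart w N 0 b = 0 := by
  rw [screenPart, lower_apply_zero, hw b 0]
  ring

theorem screenPart_symm (hw : ∀ a b, w a b = w b a) (a b : Fin 4) :
    screenPart w N a b = screenPart w N b a := by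
  rw [screenPart, screenPart, hw a b]
  ring

theorem lorentzNormSq_eq_sum_sq_screenPart (hw : ∀ a b, w a b = w b a)
    (hwN : ∀ a, ∑ b, w a b * N b = 0) (hN : ∑ μ, ∑ ν, η μ ν * N μ * N ν = 0) :
    N 0 ^ 4 * lorentzNormSq w = ∑ i : Fin 3, ∑ j : Fin 3, screenPart w N i.succ j.succ ^ 2 := by
  have h0 := hwN 0
  have h1 := hwN 1
  have h2 := hwN 2
  have h3 := hwN 3
  simp only [Fin.sum_univ_four] at h0 h1 h2 h3
  rw [← sum_mul_lower] at hN
  simp only [lorentzNormSq, raise_apply, screenPart, lower_apply, η, Fin.sum_univ_four,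
    Fin.sum_univ_three, Fin.succ_zero_eq_one, Fin.succ_one_eq_two, Fin.reduceSucc, Fin.reduceEq,
    ↓reduceIte] at hN ⊢
  rw [hw 1 0, hw 2 0, hw 3 0, hw 2 1, hw 3 1, hw 3 2] at *
  set a := N 0
  set A := w 0 0
  set β := w 0 1 * N 1 + w 0 2 * N 2 + w 0 3 * N 3
  linear_combination
    (-(N 1 ^ 2 + N 2 ^ 2 + N 3 ^ 2 - a ^ 2) * A ^ 2
      - 2 * a ^ 2 * (w 0 1 ^ 2 + w 0 2 ^ 2 + w 0 3 ^ 2 + A ^ 2) - 4 * a * A * β) * hN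
    - (4 * a ^ 3 * w 0 1 + 2 * a ^ 2 * A * N 1) * h1
    - (4 * a ^ 3 * w 0 2 + 2 * a ^ 2 * A * N 2) * h2
    - (4 * a ^ 3 * w 0 3 + 2 * a ^ 2 * A * N 3) * h3
    - 2 * a ^ 2 * β * h0

theorem screenPart_eq_zero_of_lorentzNormSq_eq_zero (hw : ∀ a b, w a b = w b a)
    (hwN : ∀ a, ∑ b, w a b * N b = 0) (hN : ∑ μ, ∑ ν, η μ ν * N μ * N ν = 0)
    (hnorm : lorentzNormSq w = 0) (a b : Fin 4) : screenPart w N a b = 0 := by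
  have hsq := lorentzNormSq_eq_sum_sq_screenPart hw hwN hN
  rw [hnorm, mul_zero, eq_comm, sum_eq_zero_iff_of_nonneg (fun i _ => by positivity)] at hsq
  cases a using Fin.cases with
  | zero => exact screenPart_zero_left hw b
  | succ i =>
    cases b using Fin.cases with
    | zero => rw [screenPart_symm hw]; exact screenPart_zero_left hw _
    | succ j =>
      have hi := hsq i (mem_univ i)
      rw [sum_eq_zero_iff_of_nonneg (fun j _ => by positivity)] at hi
      exact pow_eq_zero_iff two_ne_zero |>.1 (hi j (mem_univ j))

theorem exists_eq_nullForm_of_lorentzNormSq_eq_zero (hw : ∀ a b, w a b = w b a)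
    (hwN : ∀ a, ∑ b, w a b * N b = 0) (hN : ∑ μ, ∑ ν, η μ ν * N μ * N ν = 0) (h0 : N 0 ≠ 0)
    (hnorm : lorentzNormSq w = 0) :
    ∃ c V, V 0 = 0 ∧ ∑ a, V a * lower N a = 0 ∧ w = nullForm N V c := by
  refine ⟨w 0 0 / N 0 ^ 2, lower fun b => -w b 0 / N 0 - w 0 0 * lower N b / N 0 ^ 2, ?_, ?_, ?_⟩
  · rw [lower_apply_zero, lower_apply_zero]
    field_simp
    ring
  · calc _ = ∑ a, (-w a 0 / N 0 - w 0 0 * lower N a / N 0 ^ 2) * N a := sum_lower_mul_lower _ _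
      _ = -(∑ a, w 0 a * N a) / N 0 - w 0 0 * (∑ a, N a * lower N a) / N 0 ^ 2 := by
        rw [← sum_neg_distrib, mul_sum, sum_div, sum_div, ← sum_sub_distrib]
        exact sum_congr rfl fun a _ => by rw [hw a 0]; ring
      _ = 0 := by rw [hwN 0, sum_mul_lower, hN]; ring
  · ext a b
    have hab := screenPart_eq_zero_of_lorentzNormSq_eq_zero hw hwN hN hnorm a b
    rw [screenPart] at hab
    rw [nullForm, lower_lower]
    field_simp
    linear_combination hab

end Screen

theorem exists_electric_eq_of_contractBR_eq_zero {d : Fin 4 → Fin 4 → Fin 4 → Fin 4 → ℝ}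
    {N : Fin 4 → ℝ} (hA : ∀ α β γ δ, d α β γ δ = -d β α γ δ)
    (hB : ∀ α β γ δ, d α β γ δ = -d α β δ γ) (hC : ∀ α β γ δ, d α β γ δ = d γ δ α β)
    (hN : ∑ μ, ∑ ν, η μ ν * N μ * N ν = 0) (hN0 : N ≠ 0) (hQ : ∀ lam, contractBR d N lam = 0) :
    ∃ c, ∀ a b, electric d N a b = c * lower N a * lower N b := by
  have hnorm : lorentzNormSq (electric d N) = 0 := by
    have h := sum_mul_contractBR N hA hB hC hN
    simp only [hQ, mul_zero, sum_const_zero] at h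
    linarith
  obtain ⟨c, V, hV0, hVN, hw⟩ := exists_eq_nullForm_of_lorentzNormSq_eq_zero
    (electric_symm N hC) (sum_electric_mul_eq_zero N hB) hN (apply_zero_ne_zero_of_null hN hN0)
    hnorm
  obtain ⟨e, he : lower N e ≠ 0⟩ := Function.ne_iff.1 fun h => hN0 (lower_eq_zero_iff.1 h)
  have hVV : ∑ a, V a * lower V a = 0 := by
    have h := contractBR_eq_of_electric_eq_nullForm N hA hB hC hN hw hVN e
    rw [hQ e, eq_comm] at h
    simpa [he] using h
  have hV : V = 0 := eq_zero_of_sum_mul_lower_self_eq_zero hV0 hVV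
  exact ⟨c, fun a b => by simp [hw, hV, nullForm, lower]⟩

theorem contractBR_eq_zero_iff {d : Fin 4 → Fin 4 → Fin 4 → Fin 4 → ℝ} {N : Fin 4 → ℝ}
    (hA : ∀ α β γ δ, d α β γ δ = -d β α γ δ) (hB : ∀ α β γ δ, d α β γ δ = -d α β δ γ)
    (hC : ∀ α β γ δ, d α β γ δ = d γ δ α β) (hN : ∑ μ, ∑ ν, η μ ν * N μ * N ν = 0)
    (hN0 : N ≠ 0) :
    (∀ lam, contractBR d N lam = 0) ↔ ∃ c, ∀ a b, electric d N a b = c * lower N a * lower N b := by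
  refine ⟨exists_electric_eq_of_contractBR_eq_zero hA hB hC hN hN0, fun ⟨c, hc⟩ lam => ?_⟩
  have hw : electric d N = nullForm N 0 c := by
    ext a b
    simp [nullForm, hc, lower]
  simp [contractBR_eq_of_electric_eq_nullForm N hA hB hC hN hw (by simp) lam]

end BelRobinson

/-- For a nonzero null `N`, the asymptotic radiant supermomentum vanishes iff
`N` is a multiple principal null direction of `d`:
`(N^β N^γ d_{αβγδ}) N_ε = (N^β N^γ d_{αβγε}) N_δ`. -/
theorem radiant_supermomentum_zero_iff_multiple_PND
    (d : Fin 4 → Fin 4 → Fin 4 → Fin 4 → ℝ) (hd : IsWeylCandidate d)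
    (N : Fin 4 → ℝ) (hN : ∑ μ, ∑ ν, η μ ν * N μ * N ν = 0) (hN0 : N ≠ 0) :
    (∀ α : Fin 4, supermomentum d N α = 0) ↔
      ∀ α δ e : Fin 4,
        (∑ β, ∑ γ, N β * N γ * d α β γ δ) * (∑ μ, η e μ * N μ) =
        (∑ β, ∑ γ, N β * N γ * d α β γ e) * (∑ μ, η δ μ * N μ) := by
  open BelRobinson in
  obtain ⟨hA, hB, hC, -, -⟩ := hd
  have hlower : lower N ≠ 0 := fun h => hN0 (lower_eq_zero_iff.1 h)
  rw [supermomentum_eq_zero_iff, contractBR_eq_zero_iff hA hB hC hN hN0,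
    ← forall_mul_eq_mul_iff_exists_eq_mul_mul (electric_symm N hC) hlower]
  simp only [sum_mul_mul_eq_neg_electric N hB, neg_mul, neg_inj]
  rfl
end
end
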